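/- arXiv:1904.11030 — 2 statements merged into one kernel-verified Lean document; each statement's English description precedes it below -/
import Mathlib

section
/- Let Y₁,...,Yₙ be i.i.d. Binomial(2N, 1/(2N)) random variables. For every a > 1/2 there exists c > 0 (independent of n and N) such that P(∑_{i=1}^n (Yᵢ - 1) ≥ n^a) ≤ exp(-c · n^{min(a, 2a-1)}) for all n sufficiently large. -/
/-!
Chernoff's bound. By `1 + x ≤ eˣ`, the moment generating function of `Binomial(M, p)` at `t` is at
most `exp (M p (eᵗ - 1))`, so for `M p = 1` that of `Y - 1` is at most `exp (eᵗ - 1 - t)`, uniformly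
in `N`. With `m = min a (2a - 1)` and `t = n^(m - a) / 2 ≤ 1/2`, the estimate `eᵗ - 1 - t ≤ t²`
bounds the Chernoff exponent `-t nᵃ + n (eᵗ - 1 - t)` by `-nᵐ/2 + n^(1 + 2(m - a))/4 ≤ -nᵐ/4`,
the last step because `m ≤ 2a - 1`.
-/

open MeasureTheory ProbabilityTheory

section Binomial

variable {Ω : Type*} {mΩ : MeasurableSpace Ω} {μ : Measure Ω} {Y : Ω → ℕ} {n : ℕ}
  {p : unitInterval}

lemma hasLaw_binomial_of_measure_eq (hY : Measurable Y)
    (h : ∀ k, μ {ω | Y ω = k} =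
      ENNReal.ofReal ((n.choose k : ℝ) * (p : ℝ) ^ k * (1 - (p : ℝ)) ^ (n - k))) :
    HasLaw Y (binomial n p) μ where
  aemeasurable := hY.aemeasurable
  map_eq := Measure.ext_of_singleton fun k => by
    rw [Measure.map_apply hY (measurableSet_singleton k), binomial_singleton]
    exact h k

lemma integrable_comp_of_hasLaw_binomial (hY : HasLaw Y (binomial n p) μ) (f : ℕ → ℝ) :
    Integrable (fun ω => f (Y ω)) μ := by
  have hf : Integrable f (μ.map Y) := hY.map_eq ▸ integrable_binomial f
  exact (integrable_map_measure hf.aestronglyMeasurable hY.aemeasurable).1 hf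

lemma mgf_natCast_of_hasLaw_binomial (hY : HasLaw Y (binomial n p) μ) (t : ℝ) :
    mgf (fun ω => (Y ω : ℝ)) μ t = ((p : ℝ) * Real.exp t + (1 - p)) ^ n := by
  rw [mgf, ← Function.comp_def (fun k : ℕ => Real.exp (t * k)) Y,
    hY.integral_comp .of_discrete, integral_binomial, add_pow, Nat.range_succ_eq_Iic]
  refine Finset.sum_congr rfl fun k _ => ?_
  rw [smul_eq_mul, mul_comm t, Real.exp_nat_mul, mul_pow]
  ring

lemma mgf_natCast_le_of_hasLaw_binomial (hY : HasLaw Y (binomial n p) μ) (t : ℝ) :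
    mgf (fun ω => (Y ω : ℝ)) μ t ≤ Real.exp (n * p * (Real.exp t - 1)) := by
  have hp : (p : ℝ) ≤ 1 := p.2.2
  have hp0 : 0 ≤ (p : ℝ) := p.2.1
  have hbase : 0 ≤ (p : ℝ) * Real.exp t + (1 - p) := by
    nlinarith [Real.exp_nonneg t]
  calc mgf (fun ω => (Y ω : ℝ)) μ t = ((p : ℝ) * Real.exp t + (1 - p)) ^ n :=
        mgf_natCast_of_hasLaw_binomial hY t
    _ ≤ Real.exp (p * (Real.exp t - 1)) ^ n := by
        gcongr
        linarith [Real.add_one_le_exp (p * (Real.exp t - 1))]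
    _ = Real.exp (n * p * (Real.exp t - 1)) := by
        rw [← Real.exp_nat_mul, mul_assoc]

lemma mgf_natCast_sub_one_le_of_hasLaw_binomial (hY : HasLaw Y (binomial n p) μ)
    (hnp : n * (p : ℝ) = 1) (t : ℝ) :
    mgf (fun ω => (Y ω : ℝ) - 1) μ t ≤ Real.exp (Real.exp t - 1 - t) := by
  calc mgf (fun ω => (Y ω : ℝ) - 1) μ t = mgf (fun ω => (Y ω : ℝ)) μ t * Real.exp (-t) := by
        simpa [sub_eq_add_neg] using
          mgf_add_const (X := fun ω => (Y ω : ℝ)) (μ := μ) (t := t) (-1)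
    _ ≤ Real.exp (Real.exp t - 1) * Real.exp (-t) := by
        gcongr
        simpa only [hnp, one_mul] using mgf_natCast_le_of_hasLaw_binomial hY t
    _ = Real.exp (Real.exp t - 1 - t) := by rw [← Real.exp_add]; ring_nf

end Binomial

lemma measureReal_sum_ge_le_of_mgf_le {Ω ι : Type*} {mΩ : MeasurableSpace Ω} {μ : Measure Ω}
    [IsFiniteMeasure μ] {X : ι → Ω → ℝ} (h_indep : iIndepFun X μ) (h_meas : ∀ i, Measurable (X i))
    {t K : ℝ} (ht : 0 ≤ t) (h_int : ∀ i, Integrable (fun ω => Real.exp (t * X i ω)) μ)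
    (h_mgf : ∀ i, mgf (X i) μ t ≤ Real.exp K) (s : Finset ι) (ε : ℝ) :
    μ.real {ω | ε ≤ ∑ i ∈ s, X i ω} ≤ Real.exp (-t * ε + s.card * K) := by
  have h_mgf_sum : mgf (∑ i ∈ s, X i) μ t ≤ Real.exp (s.card * K) := by
    rw [h_indep.mgf_sum h_meas, Real.exp_nat_mul, ← Finset.prod_const]
    exact Finset.prod_le_prod (fun i _ => mgf_nonneg) fun i _ => h_mgf i
  calc μ.real {ω | ε ≤ ∑ i ∈ s, X i ω}
      ≤ Real.exp (-t * ε) * mgf (∑ i ∈ s, X i) μ t := by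
        simpa only [Finset.sum_apply] using measure_ge_le_exp_mul_mgf ε ht
          (h_indep.integrable_exp_mul_sum h_meas fun i _ => h_int i)
    _ ≤ Real.exp (-t * ε) * Real.exp (s.card * K) := by gcongr
    _ = Real.exp (-t * ε + s.card * K) := (Real.exp_add _ _).symm

lemma chernoff_exponent_le {x a m t : ℝ} (hx : 1 ≤ x) (hma : m ≤ a) (hm : m ≤ 2 * a - 1)
    (ht : t = x ^ (m - a) / 2) :
    -t * x ^ a + x * (Real.exp t - 1 - t) ≤ -(1 / 4) * x ^ m := by
  have hx0 : 0 < x := by linarith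
  have ht0 : 0 ≤ t := by rw [ht]; positivity
  have ht1 : t ≤ 1 := by
    rw [ht]; linarith [Real.rpow_le_one_of_one_le_of_nonpos hx (sub_nonpos.2 hma)]
  have h_taylor : Real.exp t - 1 - t ≤ t ^ 2 :=
    (le_abs_self _).trans (Real.abs_exp_sub_one_sub_id_le (abs_le.2 ⟨by linarith, ht1⟩))
  have h_lin : t * x ^ a = x ^ m / 2 := by
    rw [ht, div_mul_eq_mul_div, ← Real.rpow_add hx0, sub_add_cancel]
  have h_quad : x * t ^ 2 ≤ x ^ m / 4 := by
    calc x * t ^ 2 = x ^ (1 + (m - a) + (m - a)) / 4 := by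
          rw [ht, Real.rpow_add hx0, Real.rpow_add hx0, Real.rpow_one]; ring
      _ ≤ x ^ m / 4 := by gcongr; linarith
  nlinarith

/-- Large deviations for i.i.d. `Binomial(2N, 1/(2N))` variables: for every
`a > 1/2` there is `c > 0`, independent of `n` and `N`, with
`P(∑_{i<n} (Yᵢ - 1) ≥ n^a) ≤ exp(-c n^{min(a, 2a-1)})` for all large `n`. -/
theorem binomial_sum_large_deviation :
    ∀ a : ℝ, 1 / 2 < a →
    ∃ c : ℝ, 0 < c ∧ ∃ n₀ : ℕ, ∀ (N : ℕ), 1 ≤ N →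
    ∀ (Ω : Type) (m0 : MeasurableSpace Ω) (μ : Measure Ω), IsProbabilityMeasure μ →
    ∀ Y : ℕ → Ω → ℕ, (∀ i, Measurable (Y i)) →
    iIndepFun Y μ →
    (∀ i k, μ {ω | Y i ω = k} =
      ENNReal.ofReal ((Nat.choose (2 * N) k : ℝ)
        * (1 / (2 * (N : ℝ))) ^ k * (1 - 1 / (2 * (N : ℝ))) ^ (2 * N - k))) →
    ∀ n : ℕ, n₀ ≤ n →
      μ {ω | (n : ℝ) ^ a ≤ ∑ i ∈ Finset.range n, ((Y i ω : ℝ) - 1)}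
        ≤ ENNReal.ofReal (Real.exp (-c * (n : ℝ) ^ min a (2 * a - 1))) := by
  intro a _
  refine ⟨1 / 4, by norm_num, 1, fun N hN Ω _ μ _ Y hY h_indep h_pmf n hn => ?_⟩
  have hN' : (1 : ℝ) ≤ N := by exact_mod_cast hN
  let p : unitInterval := ⟨1 / (2 * N), by positivity, by rw [div_le_one (by positivity)]; linarith⟩
  have h_law : ∀ i, HasLaw (Y i) (binomial (2 * N) p) μ := fun i =>
    hasLaw_binomial_of_measure_eq (hY i) (h_pmf i)
  have hnp : ((2 * N : ℕ) : ℝ) * (p : ℝ) = 1 := by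
    push_cast
    change 2 * (N : ℝ) * (1 / (2 * N)) = 1
    field_simp
  set t : ℝ := (n : ℝ) ^ (min a (2 * a - 1) - a) / 2 with ht
  have h_tail := measureReal_sum_ge_le_of_mgf_le (X := fun i ω => (Y i ω : ℝ) - 1)
    (h_indep.comp (fun _ (k : ℕ) => (k : ℝ) - 1) fun _ => measurable_from_top)
    (fun i => (measurable_from_top.comp (hY i)).sub measurable_const) (by positivity)
    (fun i => integrable_comp_of_hasLaw_binomial (h_law i) fun k => Real.exp (t * (k - 1)))
    (fun i => mgf_natCast_sub_one_le_of_hasLaw_binomial (h_law i) hnp t)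
    (Finset.range n) ((n : ℝ) ^ a)
  rw [Finset.card_range] at h_tail
  refine (ENNReal.le_ofReal_iff_toReal_le (measure_ne_top _ _) (Real.exp_nonneg _)).2 ?_
  refine h_tail.trans (Real.exp_le_exp.2 (chernoff_exponent_le ?_ (min_le_left _ _)
    (min_le_right _ _) ht))
  exact_mod_cast hn
end

section
/- Let {X̃ₙ}_{n≥0} be the critical binomial branching process started from X̃₀ = 1 with offspring distribution Binomial(2N, 1/(2N)), and let T̃_k = inf{n : X̃ₙ ≥ 2^k or ∑_{i=1}^n X̃ᵢ ≥ 2^{2k}}. Then there exists a universal constant C (independent of N) such that P(T̃_k < ∞) ≤ C · 2^{-k} for all k ∈ ℕ. -/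
open MeasureTheory ProbabilityTheory
open scoped ENNReal NNReal

/-!
The event `T̃_k < ∞` lies in `{∃ n, X̃ₙ ≥ 2^k} ∪ {X̃_{2^k} ≠ 0}`: a population that stays below
`2^k` and is extinct by generation `2^k` has cumulative size below `(2^k)^2`. As the offspring
mean is one, `X̃ₙ` is a nonnegative martingale started at `1`, so Doob's maximal inequality
bounds the first event by `2^{-k}`. For the second, `P(X̃ₙ = 0) = φ^[n] 0` for the offspring
generating function `φ s = (1 - p + s p)^{2N}`, `p = 1/(2N)`; the third-order Bonferroni bound
for `(1 - t)^m` gives `1 - φ (1 - u) ≤ u - u²/12` uniformly in `N`, and this recursion forces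
`P(X̃ₙ ≠ 0) ≤ 12/(n + 12)`. Hence `C = 13` works.
-/

theorem one_sub_pow_ge (m : ℕ) {t : ℝ} (h1 : t ≤ 1) :
    1 - m * t + m * (m - 1) / 2 * t ^ 2 - m * (m - 1) * (m - 2) / 6 * t ^ 3 ≤ (1 - t) ^ m := by
  induction m with
  | zero => simp
  | succ m ih =>
    have hstep : (1 - t) * (1 - m * t + m * (m - 1) / 2 * t ^ 2
        - m * (m - 1) * (m - 2) / 6 * t ^ 3) ≤ (1 - t) ^ (m + 1) := by
      rw [pow_succ' (1 - t)]
      exact mul_le_mul_of_nonneg_left ih (by linarith : (0 : ℝ) ≤ 1 - t)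
    have hm : (0 : ℝ) ≤ m * (m - 1) * (m - 2) := by
      rcases m with _ | _ | m
      · simp
      · simp
      · push_cast
        nlinarith [(by positivity : (0 : ℝ) ≤ (m + 2) * (m + 1) * m)]
    push_cast
    nlinarith [mul_nonneg hm (by positivity : (0 : ℝ) ≤ t ^ 4)]

theorem le_div_add_of_le_sub_sq {u : ℕ → ℝ} {c : ℝ} (hc : 1 ≤ c) (h0 : u 0 ≤ 1)
    (hstep : ∀ n, u (n + 1) ≤ u n - u n ^ 2 / c) (n : ℕ) : u n ≤ c / (n + c) := by
  induction n with
  | zero => simpa [div_self (by positivity : c ≠ 0)] using h0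
  | succ n ih =>
    have hnc : 0 < (n : ℝ) + c := by positivity
    have hu : u n * (n + c) ≤ c := (le_div_iff₀ hnc).1 ih
    have hu' : u n ≤ c := by nlinarith [sq_nonneg (u n)]
    have key : u n - u n ^ 2 / c ≤ c / (n + 1 + c) := by
      rw [le_div_iff₀ (by positivity)]
      have hid : c * (c - (u n - u n ^ 2 / c) * (n + 1 + c))
          = (c - u n * (n + c)) * (c - u n) + u n ^ 2 := by
        field_simp
        ring
      have : 0 ≤ c * (c - (u n - u n ^ 2 / c) * (n + 1 + c)) := by
        rw [hid]; nlinarith [sq_nonneg (u n)]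
      nlinarith
    push_cast
    exact (hstep n).trans key

noncomputable def binomialPgf (n : ℕ) (p s : ℝ) : ℝ := (1 - p + s * p) ^ n

section binomialPgf

variable {n : ℕ} {p : ℝ}

theorem mapsTo_binomialPgf (hp0 : 0 ≤ p) (hp1 : p ≤ 1) :
    Set.MapsTo (binomialPgf n p) (Set.Icc 0 1) (Set.Icc 0 1) := fun s ⟨hs0, hs1⟩ =>
  ⟨pow_nonneg (by nlinarith) n, pow_le_one₀ (by nlinarith) (by nlinarith)⟩

theorem one_sub_binomialPgf_le (hnp : n * p = 1) (hp0 : 0 ≤ p) (hp : 2 * p ≤ 1) {u : ℝ}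
    (hu0 : 0 ≤ u) (hu1 : u ≤ 1) : 1 - binomialPgf n p (1 - u) ≤ u - u ^ 2 / 12 := by
  have hcubic := one_sub_pow_ge n (t := u * p) (by nlinarith)
  have e1 : (n : ℝ) * (u * p) = u := by rw [mul_left_comm, hnp, mul_one]
  have e2 : (n : ℝ) * (n - 1) / 2 * (u * p) ^ 2 = u * (u - u * p) / 2 := by
    linear_combination (n * p + 1 - p) * u ^ 2 / 2 * hnp
  have e3 : (n : ℝ) * (n - 1) * (n - 2) / 6 * (u * p) ^ 3
      = u * (u - u * p) * (u - 2 * (u * p)) / 6 := by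
    linear_combination ((n * p) ^ 2 + n * p + 1 - 3 * p * (n * p + 1) + 2 * p ^ 2) * u ^ 3 / 6 * hnp
  rw [e1, e2, e3] at hcubic
  rw [binomialPgf, show 1 - p + (1 - u) * p = 1 - u * p by ring]
  nlinarith [mul_nonneg hu0 hp0, mul_nonneg (mul_nonneg hu0 hu0) hp0,
    mul_nonneg (mul_nonneg hu0 hu0) (sub_nonneg.2 hu1)]

theorem one_sub_binomialPgf_iterate_le (hnp : n * p = 1) (hp0 : 0 ≤ p) (hp : 2 * p ≤ 1)
    (k : ℕ) : 1 - (binomialPgf n p)^[k] 0 ≤ 12 / (k + 12) := by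
  refine le_div_add_of_le_sub_sq (u := fun k => 1 - (binomialPgf n p)^[k] 0) (by norm_num)
    (by simp) (fun k => ?_) k
  obtain ⟨h0, h1⟩ := (mapsTo_binomialPgf hp0 (by linarith)).iterate k ⟨le_rfl, zero_le_one⟩
  simpa [Function.iterate_succ_apply'] using
    one_sub_binomialPgf_le hnp hp0 hp (u := 1 - (binomialPgf n p)^[k] 0) (by linarith) (by linarith)

end binomialPgf

theorem sum_range_choose_mul_pow_mul_pow_mul_cast (n : ℕ) (x y : ℝ) :
    ∑ k ∈ Finset.range (n + 2), (n + 1).choose k * x ^ k * y ^ (n + 1 - k) * (k : ℝ)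
      = (n + 1) * x * (x + y) ^ n := by
  rw [Finset.sum_range_succ', add_pow, Finset.mul_sum]
  simp only [Nat.cast_zero, mul_zero, add_zero]
  refine Finset.sum_congr rfl fun k _ => ?_
  have hchoose : ((n + 1).choose (k + 1) : ℝ) * (k + 1) = (n + 1) * n.choose k := by
    exact_mod_cast (Nat.add_one_mul_choose_eq n k).symm
  rw [Nat.add_sub_add_right]
  push_cast
  linear_combination x ^ (k + 1) * y ^ (n - k) * hchoose

section Distributions

variable {Ω : Type*} {mΩ : MeasurableSpace Ω} {μ : Measure Ω} {Y : Ω → ℕ} {n : ℕ} {p : ℝ}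

theorem lintegral_ofReal_comp_eq_sum (hY : Measurable Y) {w h : ℕ → ℝ}
    {s : Finset ℕ} (hlaw : ∀ k, μ {ω | Y ω = k} = ENNReal.ofReal (w k)) (hw : ∀ k, 0 ≤ w k)
    (hsupp : ∀ k ∉ s, w k = 0) (hh : ∀ k, 0 ≤ h k) :
    ∫⁻ ω, ENNReal.ofReal (h (Y ω)) ∂μ = ENNReal.ofReal (∑ k ∈ s, w k * h k) := by
  rw [← lintegral_map (f := fun k => ENNReal.ofReal (h k)) measurable_from_top hY,
    lintegral_countable', ENNReal.ofReal_sum_of_nonneg fun k _ => mul_nonneg (hw k) (hh k),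
    tsum_eq_sum fun k hk => by simp [Measure.map_apply hY, Set.preimage, hlaw, hsupp k hk]]
  refine Finset.sum_congr rfl fun k _ => ?_
  rw [Measure.map_apply hY (measurableSet_singleton k), ENNReal.ofReal_mul (hw k), mul_comm]
  exact congrArg (· * _) (hlaw k)

theorem lintegral_pow_of_binomial (hp0 : 0 ≤ p) (hp1 : p ≤ 1) (hY : Measurable Y)
    (hlaw : ∀ k, μ {ω | Y ω = k} = ENNReal.ofReal (n.choose k * p ^ k * (1 - p) ^ (n - k)))
    {s : ℝ} (hs : 0 ≤ s) :
    ∫⁻ ω, ENNReal.ofReal s ^ Y ω ∂μ = ENNReal.ofReal (binomialPgf n p s) := by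
  have h1p : 0 ≤ 1 - p := sub_nonneg.2 hp1
  simp_rw [← ENNReal.ofReal_pow hs]
  rw [lintegral_ofReal_comp_eq_sum hY hlaw (s := Finset.range (n + 1)) (fun k => by positivity)
    (fun k hk => by simp [Nat.choose_eq_zero_of_lt (by simpa using hk : n < k)])
    (fun k => pow_nonneg hs k), binomialPgf, add_comm (1 - p), add_pow]
  exact congrArg ENNReal.ofReal (Finset.sum_congr rfl fun k _ => by ring)

theorem lintegral_of_binomial (hp0 : 0 ≤ p) (hp1 : p ≤ 1) (hY : Measurable Y)
    (hlaw : ∀ k, μ {ω | Y ω = k} = ENNReal.ofReal (n.choose k * p ^ k * (1 - p) ^ (n - k))) :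
    ∫⁻ ω, (Y ω : ℝ≥0∞) ∂μ = ENNReal.ofReal (n * p) := by
  have h1p : 0 ≤ 1 - p := sub_nonneg.2 hp1
  simp_rw [← ENNReal.ofReal_natCast]
  rw [lintegral_ofReal_comp_eq_sum hY hlaw (s := Finset.range (n + 1)) (fun k => by positivity)
    (fun k hk => by simp [Nat.choose_eq_zero_of_lt (by simpa using hk : n < k)])
    (fun k => Nat.cast_nonneg k)]
  rcases n with _ | n
  · simp
  · rw [sum_range_choose_mul_pow_mul_pow_mul_cast, add_sub_cancel, one_pow, mul_one]
    norm_cast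

theorem lintegral_pow_sum_eq_prod_of_iIndepFun {ι : Type*} {Z : ι → Ω → ℕ} (hZ : iIndepFun Z μ)
    (hZm : ∀ i, Measurable (Z i)) (c : ℝ≥0∞) (s : Finset ι) :
    ∫⁻ ω, c ^ (∑ i ∈ s, Z i ω) ∂μ = ∏ i ∈ s, ∫⁻ ω, c ^ Z i ω ∂μ := by
  simp_rw [← Finset.prod_pow_eq_pow_sum]
  exact lintegral_prod_eq_prod_lintegral_of_indepFun s _
    (hZ.comp (fun _ k => c ^ k) fun _ => measurable_from_top)
    fun i => measurable_from_top.comp (hZm i)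

theorem lintegral_pow_eq_iterate [IsProbabilityMeasure μ] {X : ℕ → Ω → ℕ} {φ : ℝ → ℝ}
    (hφ : Set.MapsTo φ (Set.Icc 0 1) (Set.Icc 0 1)) (hX0 : ∀ ω, X 0 ω = 1)
    (hstep : ∀ n, ∀ s ∈ Set.Icc (0 : ℝ) 1,
      ∫⁻ ω, ENNReal.ofReal s ^ X (n + 1) ω ∂μ = ∫⁻ ω, ENNReal.ofReal (φ s) ^ X n ω ∂μ)
    (n : ℕ) :
    ∀ s ∈ Set.Icc (0 : ℝ) 1, ∫⁻ ω, ENNReal.ofReal s ^ X n ω ∂μ = ENNReal.ofReal (φ^[n] s) := by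
  induction n with
  | zero => simp [hX0]
  | succ n ih =>
    intro s hs
    rw [hstep n s hs, ih (φ s) (hφ hs), Function.iterate_succ_apply]

theorem measure_ne_zero_le_of_binomial [IsProbabilityMeasure μ] {X : ℕ → Ω → ℕ}
    (hnp : n * p = 1) (hp0 : 0 ≤ p) (hp : 2 * p ≤ 1) (hX : ∀ k, Measurable (X k))
    (hX0 : ∀ ω, X 0 ω = 1)
    (hstep : ∀ k, ∀ s ∈ Set.Icc (0 : ℝ) 1, ∫⁻ ω, ENNReal.ofReal s ^ X (k + 1) ω ∂μ
      = ∫⁻ ω, ENNReal.ofReal (binomialPgf n p s) ^ X k ω ∂μ) (k : ℕ) :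
    μ {ω | X k ω ≠ 0} ≤ ENNReal.ofReal (12 / (k + 12)) := by
  have hmaps := mapsTo_binomialPgf (n := n) hp0 (by linarith)
  have hmeas : MeasurableSet {ω | X k ω = 0} := hX k (measurableSet_singleton 0)
  have hext : μ {ω | X k ω = 0} = ENNReal.ofReal ((binomialPgf n p)^[k] 0) := by
    rw [← lintegral_pow_eq_iterate hmaps hX0 hstep k 0 ⟨le_rfl, zero_le_one⟩,
      ENNReal.ofReal_zero, ← lintegral_indicator_one hmeas]
    refine lintegral_congr fun ω => ?_
    by_cases h : X k ω = 0 <;> simp [h, Set.indicator]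
  obtain ⟨h0, -⟩ := hmaps.iterate k ⟨le_rfl, zero_le_one⟩
  calc μ {ω | X k ω ≠ 0} = 1 - μ {ω | X k ω = 0} :=
        prob_compl_eq_one_sub hmeas
    _ = ENNReal.ofReal (1 - (binomialPgf n p)^[k] 0) := by
        rw [hext, ENNReal.ofReal_sub 1 h0, ENNReal.ofReal_one]
    _ ≤ ENNReal.ofReal (12 / (k + 12)) :=
        ENNReal.ofReal_le_ofReal (one_sub_binomialPgf_iterate_le hnp hp0 hp k)

end Distributions

section Independence

variable {Ω : Type*} {𝓖 mΩ : MeasurableSpace Ω} {μ : Measure Ω}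

theorem setLIntegral_comp_eq_setLIntegral_lintegral_of_indep
    {ι β : Type*} [MeasurableSpace ι] [MeasurableSingletonClass ι] [Countable ι]
    [mβ : MeasurableSpace β]
    {W : Ω → ι} {Z : Ω → β} (h𝓖 : 𝓖 ≤ mΩ) (hW : Measurable[𝓖] W) (hZ : Measurable Z)
    (hind : Indep (MeasurableSpace.comap Z mβ) 𝓖 μ) {g : ι → β → ℝ≥0∞}
    (hg : ∀ i, Measurable (g i)) {A : Set Ω} (hA : MeasurableSet[𝓖] A) :
    ∫⁻ ω in A, g (W ω) (Z ω) ∂μ = ∫⁻ ω in A, ∫⁻ ω', g (W ω) (Z ω') ∂μ ∂μ := by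
  set B : ι → Set Ω := fun i => A ∩ W ⁻¹' {i}
  have hB : ∀ i, MeasurableSet[𝓖] (B i) := fun i => hA.inter (hW (measurableSet_singleton i))
  have hAB : A = ⋃ i, B i := by ext ω; simp [B]
  have hdisj : Pairwise (Function.onFun Disjoint B) :=
    fun i j hij => ((pairwise_disjoint_fiber W) hij).mono Set.inter_subset_right
      Set.inter_subset_right
  rw [hAB, lintegral_iUnion (fun i => h𝓖 _ (hB i)) hdisj,
    lintegral_iUnion (fun i => h𝓖 _ (hB i)) hdisj]
  refine tsum_congr fun i => ?_
  have hWB : ∀ ω ∈ B i, W ω = i := fun ω hω => hω.2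
  have hBm : MeasurableSet (B i) := h𝓖 _ (hB i)
  calc ∫⁻ ω in B i, g (W ω) (Z ω) ∂μ = ∫⁻ ω, g i (Z ω) * (B i).indicator 1 ω ∂μ := by
        rw [← lintegral_indicator hBm]
        refine lintegral_congr fun ω => ?_
        by_cases hω : ω ∈ B i <;> simp [hω, hWB]
    _ = (∫⁻ ω, g i (Z ω) ∂μ) * μ (B i) := by
        rw [lintegral_mul_eq_lintegral_mul_lintegral_of_independent_measurableSpace
          (f := fun ω => g i (Z ω)) (measurable_iff_comap_le.1 hZ) h𝓖 hind
          ((hg i).comp (Measurable.of_comap_le le_rfl))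
          (show Measurable[𝓖] ((B i).indicator (1 : Ω → ℝ≥0∞)) from
            measurable_const.indicator (hB i))]
        rw [lintegral_indicator_one hBm]
    _ = ∫⁻ ω in B i, ∫⁻ ω', g (W ω) (Z ω') ∂μ ∂μ := by
        rw [← setLIntegral_const (μ := μ)]
        exact setLIntegral_congr_fun hBm fun ω hω => by rw [hWB ω hω]

variable {W : Ω → ℕ} {Z : ℕ → Ω → ℕ}

theorem setLIntegral_comp_sum_range_of_indep (h𝓖 : 𝓖 ≤ mΩ) (hW : Measurable[𝓖] W)
    (hZ : ∀ i, Measurable (Z i))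
    (hind : Indep (MeasurableSpace.comap (fun ω i => Z i ω) MeasurableSpace.pi) 𝓖 μ)
    (F : ℕ → ℝ≥0∞) {A : Set Ω} (hA : MeasurableSet[𝓖] A) :
    ∫⁻ ω in A, F (∑ i ∈ Finset.range (W ω), Z i ω) ∂μ
      = ∫⁻ ω in A, ∫⁻ ω', F (∑ i ∈ Finset.range (W ω), Z i ω') ∂μ ∂μ :=
  setLIntegral_comp_eq_setLIntegral_lintegral_of_indep
    (g := fun m v => F (∑ i ∈ Finset.range m, v i)) h𝓖 hW (measurable_pi_lambda _ hZ) hind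
    (fun _ => measurable_from_top.comp (Finset.measurable_sum _ fun i _ => measurable_pi_apply i))
    hA

theorem lintegral_pow_sum_range_of_indep (h𝓖 : 𝓖 ≤ mΩ) (hW : Measurable[𝓖] W)
    (hZ : ∀ i, Measurable (Z i))
    (hind : Indep (MeasurableSpace.comap (fun ω i => Z i ω) MeasurableSpace.pi) 𝓖 μ)
    (hiid : iIndepFun Z μ) {c a : ℝ≥0∞} (hpgf : ∀ i, ∫⁻ ω, c ^ Z i ω ∂μ = a) :
    ∫⁻ ω, c ^ (∑ i ∈ Finset.range (W ω), Z i ω) ∂μ = ∫⁻ ω, a ^ W ω ∂μ := by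
  simpa [lintegral_pow_sum_eq_prod_of_iIndepFun hiid hZ, hpgf] using
    setLIntegral_comp_sum_range_of_indep h𝓖 hW hZ hind (c ^ ·) MeasurableSet.univ

theorem setLIntegral_sum_range_of_indep (h𝓖 : 𝓖 ≤ mΩ) (hW : Measurable[𝓖] W)
    (hZ : ∀ i, Measurable (Z i))
    (hind : Indep (MeasurableSpace.comap (fun ω i => Z i ω) MeasurableSpace.pi) 𝓖 μ)
    {m : ℝ≥0∞} (hmean : ∀ i, ∫⁻ ω, (Z i ω : ℝ≥0∞) ∂μ = m) {A : Set Ω}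
    (hA : MeasurableSet[𝓖] A) :
    ∫⁻ ω in A, ((∑ i ∈ Finset.range (W ω), Z i ω : ℕ) : ℝ≥0∞) ∂μ
      = ∫⁻ ω in A, W ω * m ∂μ := by
  rw [setLIntegral_comp_sum_range_of_indep h𝓖 hW hZ hind Nat.cast hA]
  refine lintegral_congr fun ω => ?_
  push_cast
  rw [lintegral_finsetSum (f := fun i ω => (Z i ω : ℝ≥0∞)) _
    fun i _ => measurable_from_top.comp (hZ i)]
  simp [hmean]

end Independence

section Martingale

variable {Ω : Type*} {m0 : MeasurableSpace Ω} {μ : Measure Ω} {ℱ : Filtration ℕ m0}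

theorem measurable_of_eq_iSup_comap {X : ℕ → Ω → ℕ}
    (hℱ : ∀ n, ℱ n = ⨆ i ∈ Finset.range (n + 1), MeasurableSpace.comap (X i) ⊤) (n : ℕ) :
    Measurable[ℱ n] (X n) := by
  rw [hℱ n]
  exact measurable_iff_comap_le.2 (le_iSup₂ (f := fun i (_ : i ∈ Finset.range (n + 1)) =>
    MeasurableSpace.comap (X i) ⊤) n (by simp))

theorem martingale_natCast_of_setLIntegral_eq [IsFiniteMeasure μ] {X : ℕ → Ω → ℕ}
    (hX : ∀ n, Measurable[ℱ n] (X n)) (h0 : ∫⁻ ω, X 0 ω ∂μ ≠ ∞)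
    (hstep : ∀ n A, MeasurableSet[ℱ n] A →
      ∫⁻ ω in A, X n ω ∂μ = ∫⁻ ω in A, X (n + 1) ω ∂μ) :
    Martingale (fun n ω => (X n ω : ℝ)) ℱ μ := by
  have hmeas : ∀ n, Measurable (X n) := fun n => (hX n).mono (ℱ.le n) le_rfl
  have hmean : ∀ n, ∫⁻ ω, X n ω ∂μ = ∫⁻ ω, X 0 ω ∂μ := by
    intro n
    induction n with
    | zero => rfl
    | succ n ih => simpa [ih] using (hstep n Set.univ MeasurableSet.univ).symm
  have hint : ∀ n, Integrable (fun ω => (X n ω : ℝ)) μ := fun n =>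
    ⟨(measurable_from_top.comp (hmeas n)).aestronglyMeasurable, by
      simpa [HasFiniteIntegral, hmean n] using h0.lt_top⟩
  refine martingale_of_setIntegral_eq_succ
    (fun n => (measurable_from_top.comp (hX n)).stronglyMeasurable) hint fun n A hA => ?_
  rw [integral_eq_lintegral_of_nonneg_ae (ae_of_all _ fun ω => Nat.cast_nonneg _)
      (hint n).1.restrict,
    integral_eq_lintegral_of_nonneg_ae (ae_of_all _ fun ω => Nat.cast_nonneg _)
      (hint (n + 1)).1.restrict]
  simp only [ENNReal.ofReal_natCast]
  rw [hstep n A hA]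

theorem MeasureTheory.Martingale.mul_measure_exists_le_le [IsFiniteMeasure μ]
    {f : ℕ → Ω → ℝ} (hf : Martingale f ℱ μ) (hnonneg : 0 ≤ f) (ε : ℝ≥0) :
    ε * μ {ω | ∃ n, (ε : ℝ) ≤ f n ω} ≤ ENNReal.ofReal (∫ ω, f 0 ω ∂μ) := by
  set S : ℕ → Set Ω := fun n =>
    {ω | (ε : ℝ) ≤ (Finset.range (n + 1)).sup' Finset.nonempty_range_add_one fun k => f k ω}
  have hS : ∀ n ω, ω ∈ S n ↔ ∃ k ≤ n, (ε : ℝ) ≤ f k ω := fun n ω => by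
    simp [S, Finset.le_sup'_iff]
  have hmono : Monotone S := fun m n hmn ω hω => by
    obtain ⟨k, hk, hεk⟩ := (hS m ω).1 hω
    exact (hS n ω).2 ⟨k, hk.trans hmn, hεk⟩
  have hU : {ω | ∃ n, (ε : ℝ) ≤ f n ω} = ⋃ n, S n := by
    ext ω
    simp only [Set.mem_ofPred_eq, Set.mem_iUnion, hS]
    exact ⟨fun ⟨n, hn⟩ => ⟨n, n, le_rfl, hn⟩, fun ⟨_, k, _, hk⟩ => ⟨k, hk⟩⟩
  rw [hU, hmono.measure_iUnion, ENNReal.mul_iSup]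
  refine iSup_le fun n => ?_
  calc (ε : ℝ≥0∞) * μ (S n) ≤ ENNReal.ofReal (∫ ω in S n, f n ω ∂μ) :=
        maximal_ineq hf.submartingale hnonneg n
    _ ≤ ENNReal.ofReal (∫ ω, f n ω ∂μ) :=
        ENNReal.ofReal_le_ofReal (setIntegral_le_integral (hf.integrable n)
          (ae_of_all _ fun ω => hnonneg n ω))
    _ = ENNReal.ofReal (∫ ω, f 0 ω ∂μ) := by
        simpa using congrArg ENNReal.ofReal
          (hf.setIntegral_eq (Nat.zero_le n) MeasurableSet.univ).symm

theorem measure_exists_le_le_inv [IsProbabilityMeasure μ] {X : ℕ → Ω → ℕ}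
    (hX : Martingale (fun n ω => (X n ω : ℝ)) ℱ μ) (hX0 : ∀ ω, X 0 ω = 1) (M : ℕ) :
    μ {ω | ∃ n, M ≤ X n ω} ≤ (M : ℝ≥0∞)⁻¹ := by
  have h := hX.mul_measure_exists_le_le (fun n ω => Nat.cast_nonneg _) M
  simp only [hX0, Nat.cast_one, integral_const, probReal_univ, smul_eq_mul, mul_one,
    ENNReal.ofReal_one, NNReal.coe_natCast, Nat.cast_le, ENNReal.coe_natCast] at h
  rwa [ENNReal.le_inv_iff_mul_le, mul_comm]

end Martingale

theorem sum_Icc_lt_sq_of_absorbing {x : ℕ → ℕ} {M : ℕ} (habs : ∀ n, x n = 0 → x (n + 1) = 0)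
    (hlt : ∀ n, x n < M) (hM : x M = 0) (n : ℕ) : ∑ i ∈ Finset.Icc 1 n, x i < M ^ 2 := by
  have hzero : ∀ i, M ≤ i → x i = 0 := fun i hi =>
    Nat.le_induction hM (fun j _ hj => habs j hj) i hi
  calc ∑ i ∈ Finset.Icc 1 n, x i = ∑ i ∈ Finset.Icc 1 n with i < M, x i :=
        (Finset.sum_filter_of_ne fun i _ hi => by
          by_contra h
          exact hi (hzero i (not_lt.1 h))).symm
    _ ≤ ∑ i ∈ Finset.range M, x i :=
        Finset.sum_le_sum_of_subset fun i hi => Finset.mem_range.2 (Finset.mem_filter.1 hi).2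
    _ < ∑ i ∈ Finset.range M, M :=
        Finset.sum_lt_sum_of_nonempty (Finset.nonempty_range_iff.2 (hlt 0).ne_bot)
          fun i _ => hlt i
    _ = M ^ 2 := by simp [sq]

theorem setOf_exists_le_or_sq_le_sum_subset {Ω : Type*} {X : ℕ → Ω → ℕ}
    (habs : ∀ n ω, X n ω = 0 → X (n + 1) ω = 0) (M : ℕ) :
    {ω | ∃ n, M ≤ X n ω ∨ M ^ 2 ≤ ∑ i ∈ Finset.Icc 1 n, X i ω}
      ⊆ {ω | ∃ n, M ≤ X n ω} ∪ {ω | X M ω ≠ 0} := by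
  rintro ω ⟨n, hn⟩
  by_contra hω
  simp only [Set.mem_union, Set.mem_ofPred_eq, not_or, not_exists, not_le, not_not] at hω
  exact hn.elim (hω.1 n).not_ge
    (sum_Icc_lt_sq_of_absorbing (x := (X · ω)) (habs · ω) hω.1 hω.2 n).not_ge

theorem inv_two_pow_add_ofReal_div_le (k : ℕ) :
    ((2 ^ k : ℕ) : ℝ≥0∞)⁻¹ + ENNReal.ofReal (12 / (2 ^ k + 12))
      ≤ ENNReal.ofReal (13 * 2 ^ (-(k : ℝ))) := by
  have h2k : (0 : ℝ) < 2 ^ k := by positivity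
  have h12 : 12 / (2 ^ k + 12) ≤ 12 * ((2 : ℝ) ^ k)⁻¹ := by
    rw [← div_eq_mul_inv]
    exact div_le_div_of_nonneg_left (by norm_num) h2k (by linarith)
  rw [← ENNReal.ofReal_natCast, Nat.cast_pow, Nat.cast_ofNat, ← ENNReal.ofReal_inv_of_pos h2k,
    ← ENNReal.ofReal_add (by positivity) (by positivity), Real.rpow_neg zero_le_two,
    Real.rpow_natCast]
  exact ENNReal.ofReal_le_ofReal (by linarith)

/-- For the critical binomial Galton–Watson process started from one individual,
with `T̃_k = inf{n : X̃ₙ ≥ 2^k or ∑_{i=1}^n X̃ᵢ ≥ 2^{2k}}`, there is a universal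
constant `C` (independent of `N`) such that `P(T̃_k < ∞) ≤ C 2^{-k}` for all `k`. -/
theorem gw_binomial_Tk_bound :
    ∃ C : ℝ, 0 < C ∧
    ∀ (N : ℕ), 1 ≤ N →
    ∀ (Ω : Type) (m0 : MeasurableSpace Ω) (μ : Measure Ω), IsProbabilityMeasure μ →
    ∀ (X : ℕ → Ω → ℕ) (Y : ℕ → ℕ → Ω → ℕ),
    (∀ n, Measurable (X n)) → (∀ n i, Measurable (Y n i)) →
    ∀ ℱ : Filtration ℕ m0,
    (∀ n, ℱ n = ⨆ i ∈ Finset.range (n + 1), MeasurableSpace.comap (X i) ⊤) →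
    (∀ ω, X 0 ω = 1) →
    (∀ n ω, X (n + 1) ω = ∑ i ∈ Finset.range (X n ω), Y (n + 1) i ω) →
    (∀ n, iIndepFun (Y (n + 1)) μ) →
    (∀ n i k, μ {ω | Y (n + 1) i ω = k} =
      ENNReal.ofReal ((Nat.choose (2 * N) k : ℝ)
        * (1 / (2 * (N : ℝ))) ^ k * (1 - 1 / (2 * (N : ℝ))) ^ (2 * N - k))) →
    (∀ n, Indep
      (MeasurableSpace.comap (fun ω (i : ℕ) => Y (n + 1) i ω) MeasurableSpace.pi)
      (ℱ n) μ) →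
    ∀ k : ℕ,
      μ {ω | ∃ n : ℕ, 2 ^ k ≤ X n ω ∨
          2 ^ (2 * k) ≤ ∑ i ∈ Finset.Icc 1 n, X i ω}
        ≤ ENNReal.ofReal (C * 2 ^ (-(k : ℝ))) := by
  refine ⟨13, by norm_num, ?_⟩
  intro N hN Ω m0 μ _ X Y hX hY ℱ hℱ hX0 hrec hiid hlaw hindep k
  have hp0 : (0 : ℝ) ≤ 1 / (2 * N) := by positivity
  have hp : 2 * (1 / (2 * N : ℝ)) ≤ 1 := by
    rw [mul_one_div, div_le_one (by positivity)]
    exact_mod_cast Nat.mul_le_mul_left 2 hN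
  have hnp : ((2 * N : ℕ) : ℝ) * (1 / (2 * N)) = 1 := by push_cast; field_simp
  have hXℱ := measurable_of_eq_iSup_comap hℱ
  have hmart : Martingale (fun n ω => (X n ω : ℝ)) ℱ μ :=
    martingale_natCast_of_setLIntegral_eq hXℱ (by simp [hX0]) fun n A hA => by
      simp_rw [hrec n]
      rw [setLIntegral_sum_range_of_indep (ℱ.le n) (hXℱ n) (hY (n + 1)) (hindep n)
        (fun i => lintegral_of_binomial hp0 (by linarith) (hY _ _) (hlaw n i)) hA, hnp]
      simp
  have hsurv := measure_ne_zero_le_of_binomial hnp hp0 hp hX hX0 (fun n s hs => by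
    simp_rw [hrec n]
    exact lintegral_pow_sum_range_of_indep (ℱ.le n) (hXℱ n) (hY (n + 1)) (hindep n) (hiid n)
      fun i => lintegral_pow_of_binomial hp0 (by linarith) (hY _ _) (hlaw n i) hs.1) (2 ^ k)
  have habs : ∀ n ω, X n ω = 0 → X (n + 1) ω = 0 := fun n ω h => by simp [hrec, h]
  calc _ ≤ μ ({ω | ∃ n, 2 ^ k ≤ X n ω} ∪ {ω | X (2 ^ k) ω ≠ 0}) := by
        rw [pow_mul']
        exact measure_mono (setOf_exists_le_or_sq_le_sum_subset habs _)
    _ ≤ ((2 ^ k : ℕ) : ℝ≥0∞)⁻¹ + ENNReal.ofReal (12 / (2 ^ k + 12)) :=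
        (measure_union_le _ _).trans
          (add_le_add (measure_exists_le_le_inv hmart hX0 _) (by simpa using hsurv))
    _ ≤ ENNReal.ofReal (13 * 2 ^ (-(k : ℝ))) := inv_two_pow_add_ofReal_div_le k
end
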